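/- arXiv:1610.06026 — 4 statements merged into one kernel-verified Lean document; each statement's English description precedes it below -/
import Mathlib

section
/- Identifiability of the monotone single index model: Suppose 𝒳 ⊂ ℝ^d is convex with nonempty interior, X has an everywhere-positive Lebesgue density on 𝒳, and f, h : ℝ → ℝ are nondecreasing, left-continuous on the intervals C_α = {αᵀx : x ∈ 𝒳} and C_β respectively (with no discontinuity at the boundary), with f non-constant on C_α, where α, β are unit vectors. If f(αᵀX) = h(βᵀX) almost surely, then α = β and f = h on C_α. -/
/-
The law of `X` charges every open subset of `𝒳`, so the set where `f (αᵀx) = h (βᵀx)` is dense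
in the interior of `𝒳`. If `α ≠ β`, moving away from an interior point `x` along `±(α - β)`
raises `αᵀ` while lowering `βᵀ` or conversely, which produces points `y₁, y₂` of that set with
`αᵀy₁ < αᵀx < αᵀy₂` and `βᵀy₂ < βᵀy₁`; monotonicity of `f` and `h` then squeezes `f` to be
constant near `αᵀx`. Hence `f` is locally constant, so constant, on the open interval
`J = αᵀ(int 𝒳)`, and by continuity at the endpoints on all of `C_α`: a contradiction.
When `α = β`, density gives points of agreement of `f` and `h` approaching `αᵀx` from the left,
so left-continuity gives `f = h` on `J`, and continuity at the endpoints extends this to `C_α`.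
-/

open MeasureTheory Set Filter Topology
open scoped InnerProductSpace

theorem ae_imp_mem_of_map_eq_withDensity {Ω V : Type*} [MeasurableSpace Ω] [MeasurableSpace V]
    {μ : Measure Ω} {ν : Measure V} {X : Ω → V} {ρ : V → ENNReal} {S E : Set V}
    (hX : Measurable X) (hρ : Measurable ρ) (hlaw : μ.map X = ν.withDensity ρ)
    (hρS : ∀ x ∈ S, 0 < ρ x) (hE : MeasurableSet E) (hXE : ∀ᵐ ω ∂μ, X ω ∈ E) :
    ∀ᵐ x ∂ν, x ∈ S → x ∈ E := by
  have hlawE : ∀ᵐ x ∂ν.withDensity ρ, x ∈ E := hlaw ▸ (ae_map_iff hX.aemeasurable hE).2 hXE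
  filter_upwards [(ae_withDensity_iff hρ).1 hlawE] with x hx hxS
  exact hx (hρS x hxS).ne'

theorem interior_subset_closure_of_ae_imp {V : Type*} [TopologicalSpace V] [MeasurableSpace V]
    {ν : Measure V} [ν.IsOpenPosMeasure] {S E : Set V} (h : ∀ᵐ x ∂ν, x ∈ S → x ∈ E) :
    interior S ⊆ closure E :=
  calc interior S ⊆ interior S ∩ closure {x | x ∈ S → x ∈ E} :=
        fun x hx => ⟨hx, ν.dense_of_ae h x⟩
    _ ⊆ closure (interior S ∩ {x | x ∈ S → x ∈ E}) := isOpen_interior.inter_closure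
    _ ⊆ closure E := closure_mono fun _ hx => hx.2 (interior_subset hx.1)

theorem mem_closure_inter_of_subset_closure {V : Type*} [TopologicalSpace V] {U W E : Set V}
    {x : V} (hU : IsOpen U) (hUE : U ⊆ closure E) (hW : IsOpen W) (hx : x ∈ U)
    (hxW : x ∈ closure W) : x ∈ closure (W ∩ E) :=
  closure_minimal (fun _ hy => hW.inter_closure ⟨hy.2, hUE hy.1⟩) isClosed_closure
    (hU.inter_closure ⟨hx, hxW⟩)

theorem mem_closure_of_forall_add_smul_mem {V : Type*} [TopologicalSpace V] [AddCommGroup V]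
    [Module ℝ V] [ContinuousAdd V] [ContinuousSMul ℝ V] {x v : V} {W : Set V}
    (hW : ∀ t : ℝ, 0 < t → x + t • v ∈ W) : x ∈ closure W := by
  have hlim : Tendsto (fun t : ℝ => x + t • v) (𝓝[>] 0) (𝓝 x) :=
    ((continuous_const.add (continuous_id.smul continuous_const)).tendsto' 0 x
      (by simp)).mono_left nhdsWithin_le_nhds
  exact mem_closure_of_tendsto hlim (eventually_nhdsWithin_of_forall hW)

theorem IsPreconnected.apply_eq_of_eventually_eq {X Y : Type*} [TopologicalSpace X] {s : Set X}
    (hs : IsPreconnected s) {f : X → Y} (hf : ∀ x ∈ s, ∀ᶠ y in 𝓝 x, f y = f x) {x y : X}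
    (hx : x ∈ s) (hy : y ∈ s) : f x = f y := by
  have hloc : IsLocallyConstant (s.domRestrict f) := (IsLocallyConstant.iff_eventually_eq _).2
    fun z => (continuous_subtype_val.tendsto z).eventually (hf z z.2)
  have := isPreconnected_iff_preconnectedSpace.1 hs
  exact hloc.apply_eq_of_isPreconnected isPreconnected_univ (mem_univ ⟨x, hx⟩) (mem_univ ⟨y, hy⟩)

theorem ContinuousWithinAt.eq_of_eqOn {X Y : Type*} [TopologicalSpace X] [TopologicalSpace Y]
    [T2Space Y] {f g : X → Y} {s t : Set X} {x : X} (hf : ContinuousWithinAt f s x)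
    (hg : ContinuousWithinAt g s x) (hfg : EqOn f g t) (hts : t ⊆ s) (hx : x ∈ closure t) :
    f x = g x :=
  haveI := mem_closure_iff_nhdsWithin_neBot.1 hx
  tendsto_nhds_unique ((hf.mono hts).congr' (eventually_nhdsWithin_of_forall hfg)) (hg.mono hts)

theorem Set.EqOn.of_continuousWithinAt_frontier {X Y : Type*} [TopologicalSpace X]
    [TopologicalSpace Y] [T2Space Y] {f g : X → Y} {J C : Set X} (hfg : EqOn f g J)
    (hJC : J ⊆ C) (hCJ : C ⊆ closure J) (hint : interior C ⊆ J)
    (hf : ∀ t ∈ C, t ∈ frontier C → ContinuousWithinAt f C t)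
    (hg : ∀ t ∈ C, t ∈ frontier C → ContinuousWithinAt g C t) : EqOn f g C := by
  intro t ht
  by_cases htJ : t ∈ J
  · exact hfg htJ
  have hfr : t ∈ frontier C := ⟨subset_closure ht, fun h => htJ (hint h)⟩
  exact (hf t ht hfr).eq_of_eqOn (hg t ht hfr) hfg hJC (hCJ ht)

theorem Monotone.apply_eq_left_of_mem_Icc {α β γ : Type*} [Preorder α] [Preorder β]
    [PartialOrder γ] {f : α → γ} {h : β → γ} (hf : Monotone f) (hh : Monotone h) {a b : α}
    {a' b' : β} (ha : f a = h a') (hb : f b = h b') (hb' : b' ≤ a') {u : α} (hu : u ∈ Icc a b) :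
    f u = f a :=
  le_antisymm (calc f u ≤ f b := hf hu.2
    _ = h b' := hb
    _ ≤ h a' := hh hb'
    _ = f a := ha.symm) (hf hu.1)

section ConvexImage

variable {E F : Type*} [NormedAddCommGroup E] [NormedSpace ℝ E] [NormedAddCommGroup F]
  [NormedSpace ℝ F] {L : E →L[ℝ] F} {S : Set E}

theorem Convex.image_subset_closure_image_interior (hS : Convex ℝ S)
    (hSint : (interior S).Nonempty) : L '' S ⊆ closure (L '' interior S) :=
  calc L '' S ⊆ L '' closure (interior S) := by
        rw [hS.closure_interior_eq_closure_of_nonempty_interior hSint]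
        exact image_mono subset_closure
    _ ⊆ closure (L '' interior S) := image_closure_subset_closure_image L.continuous

theorem Convex.interior_image_subset_image_interior [CompleteSpace E] [CompleteSpace F]
    (hS : Convex ℝ S) (hSint : (interior S).Nonempty) (hL : Function.Surjective L) :
    interior (L '' S) ⊆ L '' interior S := by
  have hopen : IsOpen (L '' interior S) := L.isOpenMap hL _ isOpen_interior
  have hconv : Convex ℝ (L '' interior S) := hS.interior.linear_image L.toLinearMap
  calc interior (L '' S) ⊆ interior (closure (L '' interior S)) :=
        interior_mono (hS.image_subset_closure_image_interior hSint)
    _ = L '' interior S := by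
        rw [hconv.interior_closure_eq_interior_of_nonempty_interior
          (hopen.interior_eq.symm ▸ hSint.image L), hopen.interior_eq]

end ConvexImage

section InnerProduct

variable {V : Type*} [NormedAddCommGroup V] [InnerProductSpace ℝ V]

theorem real_inner_sub_pos_of_norm_eq {α β : V} (h : ‖α‖ = ‖β‖) (hne : α ≠ β) :
    0 < ⟪α, α - β⟫_ℝ := by
  have hsq := norm_sub_sq_real α β
  have hpos : 0 < ‖α - β‖ := norm_pos_iff.2 (sub_ne_zero.2 hne)
  rw [← h] at hsq
  rw [inner_sub_right, real_inner_self_eq_norm_sq]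
  linarith [pow_pos hpos 2]

theorem real_inner_add_smul_lt {α x v : V} (hv : ⟪α, v⟫_ℝ < 0) {t : ℝ} (ht : 0 < t) :
    ⟪α, x + t • v⟫_ℝ < ⟪α, x⟫_ℝ := by
  rw [inner_add_right, real_inner_smul_right]
  linarith [mul_neg_of_pos_of_neg ht hv]

theorem exists_mem_real_inner_lt_of_subset_closure {U E : Set V} {x v α β : V} (hU : IsOpen U)
    (hUE : U ⊆ closure E) (hx : x ∈ U) (hα : 0 < ⟪α, v⟫_ℝ) (hβ : ⟪β, v⟫_ℝ < 0) :
    ∃ y ∈ E, ⟪α, x⟫_ℝ < ⟪α, y⟫_ℝ ∧ ⟪β, y⟫_ℝ < ⟪β, x⟫_ℝ := by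
  have hW : IsOpen {y : V | ⟪α, x⟫_ℝ < ⟪α, y⟫_ℝ ∧ ⟪β, y⟫_ℝ < ⟪β, x⟫_ℝ} :=
    (isOpen_lt continuous_const (continuous_const.inner continuous_id)).and
      (isOpen_lt (continuous_const.inner continuous_id) continuous_const)
  have hxW : x ∈ closure {y : V | ⟪α, x⟫_ℝ < ⟪α, y⟫_ℝ ∧ ⟪β, y⟫_ℝ < ⟪β, x⟫_ℝ} :=
    mem_closure_of_forall_add_smul_mem fun t ht =>
      ⟨by rw [inner_add_right, real_inner_smul_right]; linarith [mul_pos ht hα],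
        real_inner_add_smul_lt hβ ht⟩
  obtain ⟨y, hyW, hyE⟩ := closure_nonempty_iff.1
    ⟨x, mem_closure_inter_of_subset_closure hU hUE hW hx hxW⟩
  exact ⟨y, hyE, hyW⟩

variable {f h : ℝ → ℝ} {U : Set V} {x α β : V}

theorem eventually_apply_real_inner_eq_of_ne (hf : Monotone f) (hh : Monotone h) (hU : IsOpen U)
    (hx : x ∈ U) (hUE : U ⊆ closure {y | f ⟪α, y⟫_ℝ = h ⟪β, y⟫_ℝ}) (hαβ : ‖α‖ = ‖β‖)
    (hne : α ≠ β) : ∀ᶠ u in 𝓝 ⟪α, x⟫_ℝ, f u = f ⟪α, x⟫_ℝ := by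
  have hα : 0 < ⟪α, α - β⟫_ℝ := real_inner_sub_pos_of_norm_eq hαβ hne
  have hβ : 0 < ⟪β, β - α⟫_ℝ := real_inner_sub_pos_of_norm_eq hαβ.symm hne.symm
  have hα' : ⟪α, β - α⟫_ℝ < 0 := by rw [← neg_sub, inner_neg_right]; linarith
  have hβ' : ⟪β, α - β⟫_ℝ < 0 := by rw [← neg_sub, inner_neg_right]; linarith
  obtain ⟨y₂, hy₂, hαy₂, hβy₂⟩ := exists_mem_real_inner_lt_of_subset_closure hU hUE hx hα hβ'
  obtain ⟨y₁, hy₁, hβy₁, hαy₁⟩ := exists_mem_real_inner_lt_of_subset_closure hU hUE hx hβ hα'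
  have hconst : ∀ u ∈ Icc ⟪α, y₁⟫_ℝ ⟪α, y₂⟫_ℝ, f u = f ⟪α, y₁⟫_ℝ := fun u hu =>
    hf.apply_eq_left_of_mem_Icc hh hy₁ hy₂ (hβy₂.trans hβy₁).le hu
  filter_upwards [Icc_mem_nhds hαy₁ hαy₂] with u hu
  rw [hconst u hu, hconst _ ⟨hαy₁.le, hαy₂.le⟩]

theorem apply_real_inner_eq_of_continuousWithinAt_Iic (hU : IsOpen U) (hx : x ∈ U) (hα : α ≠ 0)
    (hUE : U ⊆ closure {y | f ⟪α, y⟫_ℝ = h ⟪α, y⟫_ℝ})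
    (hf : ContinuousWithinAt f (Iic ⟪α, x⟫_ℝ) ⟪α, x⟫_ℝ)
    (hh : ContinuousWithinAt h (Iic ⟪α, x⟫_ℝ) ⟪α, x⟫_ℝ) : f ⟪α, x⟫_ℝ = h ⟪α, x⟫_ℝ := by
  have hαα : ⟪α, -α⟫_ℝ < 0 := by
    rw [inner_neg_right, real_inner_self_eq_norm_sq, neg_lt_zero]
    exact pow_pos (norm_pos_iff.2 hα) 2
  have hxW : x ∈ closure ({y : V | ⟪α, y⟫_ℝ < ⟪α, x⟫_ℝ} ∩ {y | f ⟪α, y⟫_ℝ = h ⟪α, y⟫_ℝ}) :=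
    mem_closure_inter_of_subset_closure hU hUE
      (isOpen_lt (continuous_const.inner continuous_id) continuous_const) hx
      (mem_closure_of_forall_add_smul_mem fun _ ht => real_inner_add_smul_lt hαα ht)
  refine hf.eq_of_eqOn hh ?_ ?_
    (mem_closure_image (continuous_const.inner continuous_id).continuousAt hxW)
  · rintro _ ⟨y, hy, rfl⟩
    exact hy.2
  · rintro _ ⟨y, hy, rfl⟩
    exact (show ⟪α, y⟫_ℝ < ⟪α, x⟫_ℝ from hy.1).le

end InnerProduct

theorem stmt6_general {d : ℕ} {Ω : Type*} [MeasurableSpace Ω]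
    (μ : Measure Ω)
    (𝒳 : Set (EuclideanSpace ℝ (Fin d)))
    (hconv : Convex ℝ 𝒳) (hint : (interior 𝒳).Nonempty)
    (X : Ω → EuclideanSpace ℝ (Fin d)) (hXmeas : Measurable X)
    (ρ : EuclideanSpace ℝ (Fin d) → ENNReal) (hρmeas : Measurable ρ)
    (hlaw : μ.map X = volume.withDensity ρ)
    (hρpos : ∀ x ∈ 𝒳, 0 < ρ x)
    (α β : EuclideanSpace ℝ (Fin d)) (hα : ‖α‖ = 1) (hβ : ‖β‖ = 1)
    (f h : ℝ → ℝ) (hf : Monotone f) (hh : Monotone h)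
    -- left-continuity on C_α resp. C_β
    (hflc : ∀ t ∈ (fun x => ⟪α, x⟫_ℝ) '' 𝒳, ContinuousWithinAt f (Set.Iic t) t)
    (hhlc : ∀ t ∈ (fun x => ⟪β, x⟫_ℝ) '' 𝒳, ContinuousWithinAt h (Set.Iic t) t)
    -- no discontinuity point at the boundaries of C_α resp. C_β
    (hfbd : ∀ t ∈ (fun x => ⟪α, x⟫_ℝ) '' 𝒳, t ∈ frontier ((fun x => ⟪α, x⟫_ℝ) '' 𝒳) →
      ContinuousWithinAt f ((fun x => ⟪α, x⟫_ℝ) '' 𝒳) t)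
    (hhbd : ∀ t ∈ (fun x => ⟪β, x⟫_ℝ) '' 𝒳, t ∈ frontier ((fun x => ⟪β, x⟫_ℝ) '' 𝒳) →
      ContinuousWithinAt h ((fun x => ⟪β, x⟫_ℝ) '' 𝒳) t)
    -- f is non-constant on C_α
    (hnc : ∃ s ∈ (fun x => ⟪α, x⟫_ℝ) '' 𝒳, ∃ t ∈ (fun x => ⟪α, x⟫_ℝ) '' 𝒳, f s ≠ f t)
    -- f(αᵀX) = h(βᵀX) almost surely
    (heq : ∀ᵐ ω ∂μ, f (⟪α, X ω⟫_ℝ) = h (⟪β, X ω⟫_ℝ)) :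
    α = β ∧ Set.EqOn f h ((fun x => ⟪α, x⟫_ℝ) '' 𝒳) := by
  have hdense : interior 𝒳 ⊆ closure {x | f ⟪α, x⟫_ℝ = h ⟪β, x⟫_ℝ} :=
    interior_subset_closure_of_ae_imp <| ae_imp_mem_of_map_eq_withDensity hXmeas hρmeas hlaw hρpos
      (measurableSet_eq_fun (hf.measurable.comp (by fun_prop)) (hh.measurable.comp (by fun_prop)))
      heq
  have hα0 : α ≠ 0 := norm_ne_zero_iff.1 (hα ▸ one_ne_zero)
  have hsurj : Function.Surjective (innerSL ℝ α) := fun t => ⟨t • α, by simp [hα]⟩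
  have hJC := image_mono (f := fun x => ⟪α, x⟫_ℝ) (interior_subset (s := 𝒳))
  have hCJ := hconv.image_subset_closure_image_interior (L := innerSL ℝ α) hint
  have hCint := hconv.interior_image_subset_image_interior hint hsurj
  have hαβ : α = β := by
    by_contra hne
    obtain ⟨x₀, hx₀⟩ := hint
    have hloc : ∀ s ∈ (fun x => ⟪α, x⟫_ℝ) '' interior 𝒳, ∀ᶠ u in 𝓝 s, f u = f s := by
      rintro _ ⟨x, hx, rfl⟩
      exact eventually_apply_real_inner_eq_of_ne hf hh isOpen_interior hx hdense
        (hα.trans hβ.symm) hne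
    have hconstJ : EqOn f (fun _ => f ⟪α, x₀⟫_ℝ) ((fun x => ⟪α, x⟫_ℝ) '' interior 𝒳) :=
      fun _ hs => (hconv.interior.linear_image (innerSL ℝ α).toLinearMap).isPreconnected
        |>.apply_eq_of_eventually_eq hloc hs ⟨x₀, hx₀, rfl⟩
    have hconstC := hconstJ.of_continuousWithinAt_frontier hJC hCJ hCint hfbd
      fun _ _ _ => continuousWithinAt_const
    obtain ⟨s, hs, t, ht, hst⟩ := hnc
    exact hst ((hconstC hs).trans (hconstC ht).symm)
  subst hαβ
  refine ⟨rfl, EqOn.of_continuousWithinAt_frontier ?_ hJC hCJ hCint hfbd hhbd⟩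
  rintro _ ⟨x, hx, rfl⟩
  have hxC : ⟪α, x⟫_ℝ ∈ (fun x => ⟪α, x⟫_ℝ) '' 𝒳 := ⟨x, interior_subset hx, rfl⟩
  exact apply_real_inner_eq_of_continuousWithinAt_Iic isOpen_interior hx hα0 hdense
    (hflc _ hxC) (hhlc _ hxC)

/-- identifiability of the monotone single index model. If `𝒳` is convex with
nonempty interior, `X` has an everywhere-positive Lebesgue density on `𝒳`, `f, h` are
nondecreasing and left-continuous on `C_α` resp. `C_β` with no discontinuity at the
boundaries, `f` is non-constant on `C_α`, and `f(αᵀX) = h(βᵀX)` a.s. for unit vectors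
`α, β`, then `α = β` and `f = h` on `C_α`. -/
theorem stmt6 {d : ℕ} {Ω : Type*} [MeasurableSpace Ω]
    (μ : Measure Ω) [IsProbabilityMeasure μ]
    (𝒳 : Set (EuclideanSpace ℝ (Fin d)))
    (hconv : Convex ℝ 𝒳) (hint : (interior 𝒳).Nonempty)
    (X : Ω → EuclideanSpace ℝ (Fin d)) (hXmeas : Measurable X)
    (ρ : EuclideanSpace ℝ (Fin d) → ENNReal) (hρmeas : Measurable ρ)
    (hlaw : μ.map X = volume.withDensity ρ)
    (hρpos : ∀ x ∈ 𝒳, 0 < ρ x) (hρzero : ∀ x ∉ 𝒳, ρ x = 0)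
    (α β : EuclideanSpace ℝ (Fin d)) (hα : ‖α‖ = 1) (hβ : ‖β‖ = 1)
    (f h : ℝ → ℝ) (hf : Monotone f) (hh : Monotone h)
    -- left-continuity on C_α resp. C_β
    (hflc : ∀ t ∈ (fun x => ⟪α, x⟫_ℝ) '' 𝒳, ContinuousWithinAt f (Set.Iic t) t)
    (hhlc : ∀ t ∈ (fun x => ⟪β, x⟫_ℝ) '' 𝒳, ContinuousWithinAt h (Set.Iic t) t)
    -- no discontinuity point at the boundaries of C_α resp. C_β
    (hfbd : ∀ t ∈ (fun x => ⟪α, x⟫_ℝ) '' 𝒳, t ∈ frontier ((fun x => ⟪α, x⟫_ℝ) '' 𝒳) →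
      ContinuousWithinAt f ((fun x => ⟪α, x⟫_ℝ) '' 𝒳) t)
    (hhbd : ∀ t ∈ (fun x => ⟪β, x⟫_ℝ) '' 𝒳, t ∈ frontier ((fun x => ⟪β, x⟫_ℝ) '' 𝒳) →
      ContinuousWithinAt h ((fun x => ⟪β, x⟫_ℝ) '' 𝒳) t)
    -- f is non-constant on C_α
    (hnc : ∃ s ∈ (fun x => ⟪α, x⟫_ℝ) '' 𝒳, ∃ t ∈ (fun x => ⟪α, x⟫_ℝ) '' 𝒳, f s ≠ f t)
    -- f(αᵀX) = h(βᵀX) almost surely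
    (heq : ∀ᵐ ω ∂μ, f (⟪α, X ω⟫_ℝ) = h (⟪β, X ω⟫_ℝ)) :
    α = β ∧ Set.EqOn f h ((fun x => ⟪α, x⟫_ℝ) '' 𝒳) :=
  stmt6_general μ 𝒳 hconv hint X hXmeas ρ hρmeas hlaw hρpos α β hα hβ f h hf hh hflc hhlc hfbd hhbd
    hnc heq
end

section
/- Two distinct-direction monotone reparametrizations agree with the diagonal: Let α, β ∈ S_{d−1} be linearly independent unit vectors (so αᵀβ < 1), let L > 0, and let f, h : ℝ → ℝ be nondecreasing with f(αᵀx) = h(βᵀx) for all x in the open Euclidean ball B(0, L) ⊂ ℝ^d. Then f(a) = h(a) for all a ∈ (−L, L). -/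
open scoped InnerProductSpace

/-- if `α, β` are linearly independent unit vectors, `f, h` are nondecreasing
and `f(αᵀx) = h(βᵀx)` on the open ball `B(0, L)`, then `f = h` on `(−L, L)`. -/
theorem stmt8 {d : ℕ} (α β : EuclideanSpace ℝ (Fin d))
    (hα : ‖α‖ = 1) (hβ : ‖β‖ = 1)
    (hli : LinearIndependent ℝ ![α, β])
    (L : ℝ) (hL : 0 < L)
    (f h : ℝ → ℝ) (hf : Monotone f) (hh : Monotone h)
    (heq : ∀ x ∈ Metric.ball (0 : EuclideanSpace ℝ (Fin d)) L,
      f (⟪α, x⟫_ℝ) = h (⟪β, x⟫_ℝ)) :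
    ∀ a ∈ Set.Ioo (-L) L, f a = h a := by
  intro a ha
  obtain ⟨ha1, ha2⟩ := ha
  have habs : |a| < L := abs_lt.mpr ⟨ha1, ha2⟩
  have hc1 : ⟪β, α⟫_ℝ ≤ 1 := by
    calc ⟪β, α⟫_ℝ ≤ ‖β‖ * ‖α‖ := real_inner_le_norm β α
    _ = 1 := by rw [hα, hβ]; ring
  have hc2 : ⟪α, β⟫_ℝ ≤ 1 := by
    calc ⟪α, β⟫_ℝ ≤ ‖α‖ * ‖β‖ := real_inner_le_norm α β
    _ = 1 := by rw [hα, hβ]; ring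
  have hmα : (a • α) ∈ Metric.ball (0 : EuclideanSpace ℝ (Fin d)) L := by
    simp [norm_smul, hα, habs]
  have hmβ : (a • β) ∈ Metric.ball (0 : EuclideanSpace ℝ (Fin d)) L := by
    simp [norm_smul, hβ, habs]
  have e1 : f a = h (a * ⟪β, α⟫_ℝ) := by
    have := heq (a • α) hmα
    rwa [real_inner_smul_right, real_inner_smul_right, real_inner_self_eq_norm_sq, hα,
      one_pow, mul_one] at this
  have e2 : f (a * ⟪α, β⟫_ℝ) = h a := by
    have := heq (a • β) hmβ
    rwa [real_inner_smul_right, real_inner_smul_right, real_inner_self_eq_norm_sq, hβ,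
      one_pow, mul_one] at this
  rcases le_or_gt 0 a with hpos | hneg
  · have l1 : f a ≤ h a := e1 ▸ hh (by nlinarith)
    have l2 : h a ≤ f a := e2 ▸ hf (by nlinarith)
    linarith
  · have l1 : h a ≤ f a := e1 ▸ hh (by nlinarith)
    have l2 : f a ≤ h a := e2 ▸ hf (by nlinarith)
    linarith
end

section
/- Exponential family moment bound: Let Y have density y ↦ h(y,φ) exp{(yη − B(η))/φ} with respect to a dominating measure λ, where η lies in a compact interval [c,d] strictly contained in the domain of B. Then there exist a₀ > 0 and M > 0 depending only on [c,d], ε (with [c−ε,d+ε] in the domain of B) and φ such that E|Y|^s ≤ a₀ s! M^{s−2} for all integers s ≥ 1. -/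
/-!
With `t = ε / φ`, the bound `t ^ s |y| ^ s / s! ≤ exp (t |y|) ≤ exp (t y) + exp (-t y)` controls
the `s`-th absolute moment of the unnormalised density `h y exp (y η / φ)` by `s! (φ / ε) ^ s`
times its masses at `η ± ε`. As `θ ↦ exp (y θ / φ)` is monotone, these masses are dominated,
uniformly in `η ∈ [c, d]`, by `exp (B (c - ε) / φ) + exp (B (d + ε) / φ)`. For the same reason the
normaliser `exp (B η / φ)` is at least `∫ h y min (exp (y c / φ)) (exp (y d / φ))`, which is
positive because `h` does not vanish `λ`-a.e.
-/

open MeasureTheory Real Set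

lemma pow_le_sq_mul_pow_sub_two {R : Type*} [Semiring R] [PartialOrder R] [IsOrderedRing R]
    {M : R} (hM : 1 ≤ M) (s : ℕ) : M ^ s ≤ M ^ 2 * M ^ (s - 2) := by
  rcases le_or_gt s 2 with hs | hs
  · simpa [Nat.sub_eq_zero_of_le hs] using pow_le_pow_right₀ hM hs
  · rw [← pow_add, Nat.add_sub_cancel' hs.le]

lemma abs_pow_le_factorial_mul_exp {t : ℝ} (ht : 0 < t) (y : ℝ) (s : ℕ) :
    |y| ^ s ≤ s.factorial * t⁻¹ ^ s * exp (t * |y|) := by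
  have := pow_div_factorial_le_exp _ (mul_nonneg ht.le (abs_nonneg y)) s
  rw [div_le_iff₀ (by positivity), mul_pow] at this
  calc |y| ^ s = t⁻¹ ^ s * (t ^ s * |y| ^ s) := by
        rw [← mul_assoc, ← mul_pow, inv_mul_cancel₀ ht.ne', one_pow, one_mul]
    _ ≤ t⁻¹ ^ s * (exp (t * |y|) * s.factorial) := by gcongr
    _ = s.factorial * t⁻¹ ^ s * exp (t * |y|) := by ring

lemma exp_mul_div_mem_uIcc {a b θ φ : ℝ} (hθ : θ ∈ Icc a b) (hφ : 0 ≤ φ) (y : ℝ) :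
    exp (y * θ / φ) ∈ uIcc (exp (y * a / φ)) (exp (y * b / φ)) := by
  rcases le_total 0 y with hy | hy
  · exact Icc_subset_uIcc ⟨by gcongr; exact hθ.1, by gcongr; exact hθ.2⟩
  · exact Icc_subset_uIcc' ⟨exp_le_exp.2 (div_le_div_of_nonneg_right
      (mul_le_mul_of_nonpos_left hθ.2 hy) hφ), exp_le_exp.2 (div_le_div_of_nonneg_right
      (mul_le_mul_of_nonpos_left hθ.1 hy) hφ)⟩

lemma exp_mul_div_le_add_of_mem_Icc {a b θ φ : ℝ} (hθ : θ ∈ Icc a b) (hφ : 0 ≤ φ) (y : ℝ) :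
    exp (y * θ / φ) ≤ exp (y * a / φ) + exp (y * b / φ) :=
  (exp_mul_div_mem_uIcc hθ hφ y).2.trans (max_le_add_of_nonneg (exp_pos _).le (exp_pos _).le)

lemma abs_pow_mul_exp_mul_div_le {c d η φ t : ℝ} (hη : η ∈ Icc c d) (hφ : 0 < φ) (ht : 0 < t)
    (y : ℝ) (s : ℕ) :
    |y| ^ s * exp (y * η / φ) ≤
      2 * s.factorial * (φ / t) ^ s * (exp (y * (c - t) / φ) + exp (y * (d + t) / φ)) := by
  have hpow := abs_pow_le_factorial_mul_exp (div_pos ht hφ) y s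
  rw [inv_div] at hpow
  have hshift : exp (t / φ * |y|) * exp (y * η / φ) ≤
      exp (y * (η - t) / φ) + exp (y * (η + t) / φ) := by
    rw [← exp_add]
    rcases le_total 0 y with hy | hy
    · refine le_add_of_nonneg_of_le (exp_pos _).le (le_of_eq ?_)
      rw [abs_of_nonneg hy]; ring_nf
    · refine le_add_of_le_of_nonneg (le_of_eq ?_) (exp_pos _).le
      rw [abs_of_nonpos hy]; ring_nf
  have hwide : ∀ θ ∈ Icc (η - t) (η + t), θ ∈ Icc (c - t) (d + t) := fun θ hθ =>
    ⟨by linarith [hη.1, hθ.1], by linarith [hη.2, hθ.2]⟩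
  calc |y| ^ s * exp (y * η / φ)
      ≤ s.factorial * (φ / t) ^ s * (exp (t / φ * |y|) * exp (y * η / φ)) := by
        rw [← mul_assoc]; gcongr
    _ ≤ s.factorial * (φ / t) ^ s * (exp (y * (η - t) / φ) + exp (y * (η + t) / φ)) := by gcongr
    _ ≤ s.factorial * (φ / t) ^ s * ((exp (y * (c - t) / φ) + exp (y * (d + t) / φ)) +
          (exp (y * (c - t) / φ) + exp (y * (d + t) / φ))) := by
        gcongr <;>
          exact exp_mul_div_le_add_of_mem_Icc (hwide _ (by constructor <;> linarith)) hφ.le y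
    _ = _ := by ring

lemma aestronglyMeasurable_of_integrable_mul_exp {lam : Measure ℝ} {h u : ℝ → ℝ}
    (hu : Continuous u) (hint : Integrable (fun y => h y * exp (u y)) lam) :
    AEStronglyMeasurable h lam :=
  (hint.aestronglyMeasurable.mul (continuous_exp.comp hu.neg).aestronglyMeasurable).congr
    (ae_of_all _ fun y => by simp [mul_assoc, ← exp_add])

section TiltedIntegrals

variable {lam : Measure ℝ} {h : ℝ → ℝ} {φ : ℝ}

lemma exists_pos_le_integral_mul_exp (hh : ∀ y, 0 ≤ h y) (hφ : 0 ≤ φ) {a b : ℝ} (hab : a ≤ b)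
    (hint : ∀ θ ∈ Icc a b, Integrable (fun y => h y * exp (y * θ / φ)) lam)
    (hpos : 0 < ∫ y, h y * exp (y * a / φ) ∂lam) :
    ∃ m > 0, ∀ θ ∈ Icc a b, m ≤ ∫ y, h y * exp (y * θ / φ) ∂lam := by
  have ha : a ∈ Icc a b := ⟨le_rfl, hab⟩
  set g : ℝ → ℝ := fun y => min (exp (y * a / φ)) (exp (y * b / φ))
  have hg_pos : ∀ y, 0 < g y := fun y => lt_min (exp_pos _) (exp_pos _)
  have hhg : Integrable (fun y => h y * g y) lam := by
    refine (hint a ha).mono' ((aestronglyMeasurable_of_integrable_mul_exp (by fun_prop)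
      (hint a ha)).mul (by fun_prop : Continuous g).aestronglyMeasurable) (ae_of_all _ fun y => ?_)
    rw [norm_of_nonneg (mul_nonneg (hh y) (hg_pos y).le)]
    exact mul_le_mul_of_nonneg_left (min_le_left _ _) (hh y)
  refine ⟨∫ y, h y * g y ∂lam, show 0 < _ from ?_, fun θ hθ =>
    integral_mono hhg (hint θ hθ) fun y =>
      mul_le_mul_of_nonneg_left (exp_mul_div_mem_uIcc hθ hφ y).1 (hh y)⟩
  rw [integral_pos_iff_support_of_nonneg (fun y => mul_nonneg (hh y) (hg_pos y).le) hhg]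
  rw [integral_pos_iff_support_of_nonneg (fun y => mul_nonneg (hh y) (exp_pos _).le)
    (hint a ha)] at hpos
  rw [Function.support_mul_of_ne_zero_right _ fun y => (hg_pos y).ne']
  rwa [Function.support_mul_of_ne_zero_right _ fun y => (exp_pos _).ne'] at hpos

lemma integrable_abs_pow_mul_and_integral_le (hh : ∀ y, 0 ≤ h y) (hφ : 0 < φ) {c d t η : ℝ}
    (ht : 0 < t) (hη : η ∈ Icc c d)
    (hint : ∀ θ ∈ Icc (c - t) (d + t), Integrable (fun y => h y * exp (y * θ / φ)) lam)
    (s : ℕ) :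
    Integrable (fun y => |y| ^ s * (h y * exp (y * η / φ))) lam ∧
      ∫ y, |y| ^ s * (h y * exp (y * η / φ)) ∂lam ≤ 2 * s.factorial * (φ / t) ^ s *
        ((∫ y, h y * exp (y * (c - t) / φ) ∂lam) + ∫ y, h y * exp (y * (d + t) / φ) ∂lam) := by
  have hc : c - t ∈ Icc (c - t) (d + t) := ⟨le_rfl, by linarith [hη.1, hη.2]⟩
  have hd : d + t ∈ Icc (c - t) (d + t) := ⟨by linarith [hη.1, hη.2], le_rfl⟩
  have hη' : η ∈ Icc (c - t) (d + t) := ⟨by linarith [hη.1], by linarith [hη.2]⟩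
  set C : ℝ := 2 * s.factorial * (φ / t) ^ s
  have hbound : ∀ y, |y| ^ s * (h y * exp (y * η / φ)) ≤
      C * (h y * exp (y * (c - t) / φ) + h y * exp (y * (d + t) / φ)) := fun y => by
    calc |y| ^ s * (h y * exp (y * η / φ)) = h y * (|y| ^ s * exp (y * η / φ)) := by ring
      _ ≤ h y * (C * (exp (y * (c - t) / φ) + exp (y * (d + t) / φ))) :=
        mul_le_mul_of_nonneg_left (abs_pow_mul_exp_mul_div_le hη hφ ht y s) (hh y)
      _ = _ := by ring
  have hdom : Integrable (fun y => C * (h y * exp (y * (c - t) / φ) +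
      h y * exp (y * (d + t) / φ))) lam := ((hint _ hc).add (hint _ hd)).const_mul C
  have hmom : Integrable (fun y => |y| ^ s * (h y * exp (y * η / φ))) lam :=
    hdom.mono' ((continuous_abs.pow s).aestronglyMeasurable.mul (hint η hη').aestronglyMeasurable)
      (ae_of_all _ fun y => by
        rw [norm_of_nonneg (by have := hh y; positivity)]; exact hbound y)
  refine ⟨hmom, (integral_mono hmom hdom hbound).trans_eq ?_⟩
  rw [integral_const_mul, integral_add (hint _ hc) (hint _ hd)]

end TiltedIntegrals

theorem stmt11_general (lam : Measure ℝ) (h : ℝ → ℝ)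
    (hnonneg : ∀ y, 0 ≤ h y)
    (φ : ℝ) (hφ : 0 < φ)
    (B : ℝ → ℝ) (c d ε : ℝ) (hcd : c ≤ d) (hε : 0 < ε)
    -- the log-partition identity holds (with integrability) on [c−ε, d+ε]
    (hB : ∀ η ∈ Set.Icc (c - ε) (d + ε),
      Integrable (fun y => h y * Real.exp (y * η / φ)) lam ∧
      Real.exp (B η / φ) = ∫ y, h y * Real.exp (y * η / φ) ∂lam) :
    ∃ a₀ > (0 : ℝ), ∃ M > (0 : ℝ), ∀ η ∈ Set.Icc c d, ∀ s : ℕ, 1 ≤ s →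
      Integrable (fun y => |y| ^ s * (h y * Real.exp ((y * η - B η) / φ))) lam ∧
      (∫ y, |y| ^ s * (h y * Real.exp ((y * η - B η) / φ)) ∂lam)
        ≤ a₀ * (Nat.factorial s) * M ^ (s - 2) := by
  have hsub : Icc c d ⊆ Icc (c - ε) (d + ε) := Icc_subset_Icc (by linarith) (by linarith)
  obtain ⟨m, hm, hZ⟩ := exists_pos_le_integral_mul_exp hnonneg hφ.le hcd
    (fun θ hθ => (hB θ (hsub hθ)).1) ((hB c (hsub ⟨le_rfl, hcd⟩)).2 ▸ exp_pos _)
  set K := exp (B (c - ε) / φ) + exp (B (d + ε) / φ)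
  set M := max (φ / ε) 1
  refine ⟨2 * K / m * M ^ 2, by positivity, M, by positivity, fun η hη s _ => ?_⟩
  obtain ⟨hint, hle⟩ := integrable_abs_pow_mul_and_integral_le hnonneg hφ hε hη
    (fun θ hθ => (hB θ hθ).1) s
  rw [← (hB _ ⟨le_rfl, by linarith⟩).2, ← (hB _ ⟨by linarith, le_rfl⟩).2] at hle
  have hZη : m ≤ exp (B η / φ) := (hB η (hsub hη)).2 ▸ hZ η hη
  have hnormalize : (fun y => |y| ^ s * (h y * exp ((y * η - B η) / φ))) =
      fun y => |y| ^ s * (h y * exp (y * η / φ)) / exp (B η / φ) := by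
    ext y; rw [sub_div, exp_sub]; ring
  rw [hnormalize, integral_div]
  refine ⟨hint.div_const _, ?_⟩
  have hM : (φ / ε) ^ s ≤ M ^ 2 * M ^ (s - 2) :=
    (pow_le_pow_left₀ (by positivity) (le_max_left _ _) s).trans
      (pow_le_sq_mul_pow_sub_two (le_max_right _ _) s)
  calc _ ≤ 2 * s.factorial * (φ / ε) ^ s * K / m :=
        div_le_div₀ (by positivity) hle hm hZη
    _ ≤ 2 * s.factorial * (M ^ 2 * M ^ (s - 2)) * K / m := by gcongr
    _ = 2 * K / m * M ^ 2 * s.factorial * M ^ (s - 2) := by ring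

/-- exponential family moment bound. If `Y` has density
`y ↦ h(y,φ) exp((yη − B(η))/φ)` w.r.t. `λ` and `η` ranges in a compact interval `[c,d]`
with `[c−ε, d+ε]` contained in the domain of `B`, then there exist `a₀, M > 0` depending
only on `[c,d]`, `ε` and `φ` such that `E|Y|^s ≤ a₀ s! M^{s−2}` for all integers `s ≥ 1`. -/
theorem stmt11 (lam : Measure ℝ) (h : ℝ → ℝ) (hmeas : Measurable h)
    (hnonneg : ∀ y, 0 ≤ h y)
    (φ : ℝ) (hφ : 0 < φ)
    (B : ℝ → ℝ) (c d ε : ℝ) (hcd : c ≤ d) (hε : 0 < ε)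
    -- the log-partition identity holds (with integrability) on [c−ε, d+ε]
    (hB : ∀ η ∈ Set.Icc (c - ε) (d + ε),
      Integrable (fun y => h y * Real.exp (y * η / φ)) lam ∧
      Real.exp (B η / φ) = ∫ y, h y * Real.exp (y * η / φ) ∂lam) :
    ∃ a₀ > (0 : ℝ), ∃ M > (0 : ℝ), ∀ η ∈ Set.Icc c d, ∀ s : ℕ, 1 ≤ s →
      Integrable (fun y => |y| ^ s * (h y * Real.exp ((y * η - B η) / φ))) lam ∧
      (∫ y, |y| ^ s * (h y * Real.exp ((y * η - B η) / φ)) ∂lam)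
        ≤ a₀ * (Nat.factorial s) * M ^ (s - 2) :=
  stmt11_general lam h hnonneg φ hφ B c d ε hcd hε hB
end

section
/- Population identification of the index by the linear estimator: Let X be an elliptically symmetric random vector in ℝ^d with mean μ and positive definite covariance Σ, and let Y satisfy E[Y|X] = Ψ₀(α₀ᵀX) with ‖α₀‖=1, Ψ₀ bounded. If the linearity-of-conditional-means property E[X − μ | α₀ᵀX] = (α₀ᵀ(X−μ)) Σα₀ / (α₀ᵀΣα₀) holds, then Cov(X,Y) = λ* Σα₀ where λ* = Cov(Ψ₀(α₀ᵀX), α₀ᵀX)/(α₀ᵀΣα₀); hence Σ^{-1}Cov(X,Y) = λ* α₀, and if additionally λ* > 0 then Σ^{-1}Cov(X,Y)/‖Σ^{-1}Cov(X,Y)‖ = α₀. -/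
/-!
Condition first on `X` and then on the index `T = α₀ᵀX`:
`Cov(Xᵢ, Y) = E[(Xᵢ - μᵢ) Ψ₀(T)] = E[Ψ₀(T) E[Xᵢ - μᵢ | T]]`, and the linear-conditional-mean
property turns the last expression into `Cov(Ψ₀(T), T) · (Σα₀)ᵢ / (α₀ᵀΣα₀)`. Inverting `Σ`
gives `λ* α₀`, whose normalization is `α₀` since `‖α₀‖ = 1` and `λ* > 0`.
-/

open MeasureTheory

section CondExp

variable {Ω : Type*} {m m0 : MeasurableSpace Ω} {μ : Measure Ω}

theorem integral_mul_eq_of_condExp_ae_eq (hm : m ≤ m0) [SigmaFinite (μ.trim hm)]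
    {f g h : Ω → ℝ} (hf : StronglyMeasurable[m] f) (hfg : Integrable (f * g) μ)
    (hg : Integrable g μ) (hgh : μ[g|m] =ᵐ[μ] h) :
    ∫ ω, f ω * g ω ∂μ = ∫ ω, f ω * h ω ∂μ :=
  calc ∫ ω, f ω * g ω ∂μ = ∫ ω, μ[f * g|m] ω ∂μ := (integral_condExp hm).symm
    _ = ∫ ω, (f * μ[g|m]) ω ∂μ :=
      integral_congr_ae (condExp_mul_of_stronglyMeasurable_left hf hfg hg)
    _ = ∫ ω, f ω * h ω ∂μ := integral_congr_ae (hgh.mono fun ω hω => by simp [hω])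

theorem integral_mul_sub_const_of_integral_eq_zero {f g : Ω → ℝ} (hf : Integrable f μ)
    (hfg : Integrable (fun ω => f ω * g ω) μ) (hf0 : ∫ ω, f ω ∂μ = 0) (c : ℝ) :
    ∫ ω, f ω * (g ω - c) ∂μ = ∫ ω, f ω * g ω ∂μ := by
  simp_rw [mul_sub]
  rw [integral_sub hfg (hf.mul_const c), integral_mul_const, hf0, zero_mul, sub_zero]

theorem integral_mul_comp_eq_of_condExp_linear [IsFiniteMeasure μ] {T Z : Ω → ℝ}
    (hT : Measurable T) (hTint : Integrable T μ) (hZ : Integrable Z μ)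
    {Ψ : ℝ → ℝ} (hΨ : Measurable Ψ) {C : ℝ} (hC : ∀ t, |Ψ t| ≤ C) {a c : ℝ}
    (hlin : μ[Z | MeasurableSpace.comap T inferInstance] =ᵐ[μ] fun ω => (T ω - a) * c) :
    ∫ ω, Z ω * Ψ (T ω) ∂μ = ((∫ ω, Ψ (T ω) * T ω ∂μ) - (∫ ω, Ψ (T ω) ∂μ) * a) * c := by
  have hΨT : Measurable fun ω => Ψ (T ω) := hΨ.comp hT
  have hΨT_bdd : ∀ᵐ ω ∂μ, ‖Ψ (T ω)‖ ≤ C := ae_of_all _ fun ω => hC (T ω)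
  have hΨT_int : Integrable (fun ω => Ψ (T ω)) μ :=
    (integrable_const C).mono' hΨT.aestronglyMeasurable hΨT_bdd
  have hΨT_mulT : Integrable (fun ω => Ψ (T ω) * T ω) μ :=
    hTint.bdd_mul hΨT.aestronglyMeasurable hΨT_bdd
  have hΨT_sm : StronglyMeasurable[MeasurableSpace.comap T inferInstance] fun ω => Ψ (T ω) :=
    (hΨ.comp (comap_measurable T)).stronglyMeasurable
  calc ∫ ω, Z ω * Ψ (T ω) ∂μ = ∫ ω, Ψ (T ω) * Z ω ∂μ := by simp_rw [mul_comm]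
    _ = ∫ ω, Ψ (T ω) * ((T ω - a) * c) ∂μ :=
      integral_mul_eq_of_condExp_ae_eq hT.comap_le hΨT_sm
        (hZ.bdd_mul hΨT.aestronglyMeasurable hΨT_bdd) hZ hlin
    _ = ∫ ω, (Ψ (T ω) * T ω) * c - Ψ (T ω) * (a * c) ∂μ := by
      congr 1; ext ω; ring
    _ = ((∫ ω, Ψ (T ω) * T ω ∂μ) - (∫ ω, Ψ (T ω) ∂μ) * a) * c := by
      rw [integral_sub (hΨT_mulT.mul_const c) (hΨT_int.mul_const _), integral_mul_const,
        integral_mul_const]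
      ring

end CondExp

theorem Matrix.inv_mulVec_eq_smul_of_eq_smul_mulVec {n R : Type*} [Fintype n] [DecidableEq n]
    [CommRing R] {A : Matrix n n R} (hA : IsUnit A) {u v : n → R} {c : R}
    (h : ∀ i, u i = c * A.mulVec v i) : A⁻¹.mulVec u = fun i => c * v i := by
  have := hA.invertible
  refine Matrix.inv_mulVec_eq_vec ?_
  ext i
  rw [h i]
  exact (congrFun (A.mulVec_smul c v) i).symm

theorem normalize_smul_of_sum_sq_eq_one {ι : Type*} [Fintype ι] {v : ι → ℝ}
    (hv : ∑ i, v i ^ 2 = 1) {c : ℝ} (hc : 0 < c) :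
    (fun i => (Real.sqrt (∑ j, (c * v j) ^ 2))⁻¹ * (c * v i)) = v := by
  have hnorm : ∑ j, (c * v j) ^ 2 = c ^ 2 := by
    simp only [mul_pow, ← Finset.mul_sum, hv, mul_one]
  ext i
  rw [hnorm, Real.sqrt_sq hc.le]
  field_simp

/-- population identification of the index by the linear estimator. Under the
linearity-of-conditional-means property of elliptically symmetric designs,
`Cov(X,Y) = λ* Σ α₀` with `λ* = Cov(Ψ₀(α₀ᵀX), α₀ᵀX)/(α₀ᵀΣα₀)`; hence
`Σ⁻¹ Cov(X,Y) = λ* α₀`, and if `λ* > 0` its normalization recovers `α₀`. -/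
theorem stmt16 {d : ℕ} {Ω : Type*} [MeasurableSpace Ω]
    (μ : Measure Ω) [IsProbabilityMeasure μ]
    (X : Ω → (Fin d → ℝ)) (hXmeas : Measurable X)
    (Y : Ω → ℝ) (hYint : Integrable Y μ)
    (hXint : ∀ i, Integrable (fun ω => X ω i) μ)
    (hXYint : ∀ i, Integrable (fun ω => X ω i * Y ω) μ)
    (μv : Fin d → ℝ) (hμv : ∀ i, μv i = ∫ ω, X ω i ∂μ)
    (Sig : Matrix (Fin d) (Fin d) ℝ)
    (hSigpd : Sig.PosDef)
    (α₀ : Fin d → ℝ) (hα₀ : ∑ i, α₀ i ^ 2 = 1)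
    (Ψ₀ : ℝ → ℝ) (hΨmeas : Measurable Ψ₀) (hΨbdd : ∃ C : ℝ, ∀ t, |Ψ₀ t| ≤ C)
    -- E[Y | X] = Ψ₀(α₀ᵀX)
    (hcond : (fun ω => Ψ₀ (∑ j, α₀ j * X ω j)) =ᵐ[μ]
      μ[Y | MeasurableSpace.comap X (by infer_instance)])
    -- linearity of conditional means: E[X − μ | α₀ᵀX] = (α₀ᵀ(X−μ)) Σα₀ / (α₀ᵀΣα₀)
    (hlin : ∀ i,
      μ[fun ω => X ω i - μv i |
        MeasurableSpace.comap (fun ω => ∑ j, α₀ j * X ω j) (by infer_instance)]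
      =ᵐ[μ] fun ω =>
        ((∑ j, α₀ j * X ω j) - ∑ j, α₀ j * μv j) * Sig.mulVec α₀ i
          / (∑ i, ∑ j, α₀ i * Sig i j * α₀ j)) :
    let T : Ω → ℝ := fun ω => ∑ j, α₀ j * X ω j
    let lam : ℝ :=
      ((∫ ω, Ψ₀ (T ω) * T ω ∂μ) - (∫ ω, Ψ₀ (T ω) ∂μ) * (∫ ω, T ω ∂μ))
        / (∑ i, ∑ j, α₀ i * Sig i j * α₀ j)
    let Cv : Fin d → ℝ := fun i => ∫ ω, (X ω i - μv i) * (Y ω - ∫ ω', Y ω' ∂μ) ∂μ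
    (∀ i, Cv i = lam * Sig.mulVec α₀ i) ∧
    (Sig⁻¹.mulVec Cv = fun i => lam * α₀ i) ∧
    (0 < lam →
      (fun i => (Real.sqrt (∑ j, (Sig⁻¹.mulVec Cv j) ^ 2))⁻¹ * Sig⁻¹.mulVec Cv i) = α₀) := by
  intro T lam Cv
  obtain ⟨C, hC⟩ := hΨbdd
  have hT : Measurable T :=
    Finset.measurable_sum _ fun j _ => (measurable_pi_apply j |>.comp hXmeas).const_mul _
  have hT_mean : ∫ ω, T ω ∂μ = ∑ j, α₀ j * μv j := by
    rw [integral_finsetSum _ fun j _ => (hXint j).const_mul _]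
    simp_rw [integral_const_mul, hμv]
  have hcov : ∀ i, Cv i = lam * Sig.mulVec α₀ i := by
    intro i
    have hZ : Integrable (fun ω => X ω i - μv i) μ := (hXint i).sub (integrable_const _)
    have hZY : Integrable (fun ω => (X ω i - μv i) * Y ω) μ :=
      ((hXYint i).sub (hYint.const_mul (μv i))).congr (ae_of_all _ fun ω => by simp [sub_mul])
    have hZ_sm : StronglyMeasurable[MeasurableSpace.comap X inferInstance]
        fun ω => X ω i - μv i :=
      ((measurable_pi_apply i).comp (comap_measurable X) |>.sub_const _).stronglyMeasurable
    calc Cv i = ∫ ω, (X ω i - μv i) * Y ω ∂μ :=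
          integral_mul_sub_const_of_integral_eq_zero hZ hZY (by
            rw [integral_sub (hXint i) (integrable_const _), hμv]; simp) _
      _ = ∫ ω, (X ω i - μv i) * Ψ₀ (T ω) ∂μ :=
          integral_mul_eq_of_condExp_ae_eq hXmeas.comap_le hZ_sm hZY hYint hcond.symm
      _ = ((∫ ω, Ψ₀ (T ω) * T ω ∂μ) - (∫ ω, Ψ₀ (T ω) ∂μ) * ∑ j, α₀ j * μv j)
            * (Sig.mulVec α₀ i / ∑ i, ∑ j, α₀ i * Sig i j * α₀ j) :=
          integral_mul_comp_eq_of_condExp_linear hT (integrable_finsetSum _ fun j _ =>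
            (hXint j).const_mul _) hZ hΨmeas hC
            ((hlin i).trans (ae_of_all _ fun ω => mul_div_assoc _ _ _))
      _ = lam * Sig.mulVec α₀ i := by simp only [lam, hT_mean]; ring
  have hinv : Sig⁻¹.mulVec Cv = fun i => lam * α₀ i :=
    Matrix.inv_mulVec_eq_smul_of_eq_smul_mulVec hSigpd.isUnit hcov
  exact ⟨hcov, hinv, fun hlam => hinv ▸ normalize_smul_of_sum_sq_eq_one hα₀ hlam⟩
end
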